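/- Let (L, (h_1, …, h_m)) be a backward self-similar system such that L_x is connected for every infinite word x ∈ {1, …, m}^ℕ. Let P be the set of all sequences (B_k)_{k≥1} such that each B_k is a connected component of Γ_k and, for every k, the truncation map w ↦ w|k maps every vertex of B_{k+1} to a vertex of B_k (i.e., P is the inverse limit of the sets of connected components of the graphs Γ_k). Then the following map Φ is well defined and is a bijection from P onto the set of connected components of L: given (B_k)_{k≥1} ∈ P, there exists x ∈ {1, …, m}^ℕ with x|k ∈ B_k for every k, and Φ((B_k)_k) is the connected component of L containing L_x; this component does not depend on the choice of such x. -/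

import Mathlib

open Set

/-- `h_w⁻¹(L)` for a finite word `w = (w₁, …, w_k)`, encoded as the list `[w₁, …, w_k]`,
namely `h_{w₁}⁻¹(h_{w₂}⁻¹(⋯ h_{w_k}⁻¹(L) ⋯))`. -/
def bwdPre {X : Type*} {m : ℕ} (h : Fin m → X → X) (L : Set X) : List (Fin m) → Set X
  | [] => L
  | a :: w => h a ⁻¹' bwdPre h L w

/-- The truncation `x|k` of an infinite word `x`. -/
def wordTrunc {m : ℕ} (x : ℕ → Fin m) (k : ℕ) : List (Fin m) :=
  List.ofFn fun i : Fin k => x i.val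

/-- `L_x = ⋂_{j ≥ 1} h_{x|j}⁻¹(L)`. -/
def bwdLimSet {X : Type*} {m : ℕ} (h : Fin m → X → X) (L : Set X) (x : ℕ → Fin m) : Set X :=
  ⋂ j : ℕ, bwdPre h L (wordTrunc x (j + 1))

/-- The graph `Γ_k`: vertices are the words of length `k`, and two distinct words `w, w'`
are adjacent iff `h_w⁻¹(L) ∩ h_{w'}⁻¹(L) ≠ ∅`. -/
def bwdGraph {X : Type*} {m : ℕ} (h : Fin m → X → X) (L : Set X) (k : ℕ) :
    SimpleGraph (Fin k → Fin m) where
  Adj w w' := w ≠ w' ∧ (bwdPre h L (List.ofFn w) ∩ bwdPre h L (List.ofFn w')).Nonempty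
  symm := by
    constructor
    intro w w' hw
    obtain ⟨hne, hx⟩ := hw
    exact ⟨hne.symm, by rwa [Set.inter_comm] at hx⟩
  loopless := by
    constructor
    intro w hw
    exact hw.1 rfl

/-- The inverse limit `P` of the sets of connected components of the graphs `Γ_k`:
sequences `(B_k)_{k ≥ 1}` of connected components that are compatible under the
truncation maps `w ↦ w|k`. (Here `B k` is a component of `Γ_{k+1}`.) -/
def bwdCompSeq {X : Type*} {m : ℕ} (h : Fin m → X → X) (L : Set X) : Type _ :=
  {B : (k : ℕ) → (bwdGraph h L (k + 1)).ConnectedComponent //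
    ∀ (k : ℕ) (w : Fin (k + 2) → Fin m),
      (bwdGraph h L (k + 2)).connectedComponentMk w = B (k + 1) →
      (bwdGraph h L (k + 1)).connectedComponentMk (fun i => w i.castSucc) = B k}

set_option linter.unusedSectionVars false

section Aux
variable {X : Type*} [MetricSpace X] {m : ℕ} (h : Fin m → X → X) (L : Set X)

lemma bwdPre_mono {L₁ L₂ : Set X} (hs : L₁ ⊆ L₂) :
    ∀ w : List (Fin m), bwdPre h L₁ w ⊆ bwdPre h L₂ w
  | [] => hs
  | _ :: w => Set.preimage_mono (bwdPre_mono hs w)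

lemma bwdPre_subset (hinv : L = ⋃ j, h j ⁻¹' L) :
    ∀ w : List (Fin m), bwdPre h L w ⊆ L
  | [] => subset_rfl
  | a :: w => by
      intro z hz
      have h1 : h a z ∈ L := bwdPre_subset hinv w hz
      have h2 : z ∈ ⋃ j, h j ⁻¹' L := Set.mem_iUnion.2 ⟨a, h1⟩
      rwa [← hinv] at h2

lemma bwdPre_closed (hcont : ∀ j, Continuous (h j)) (hL : IsClosed L) :
    ∀ w : List (Fin m), IsClosed (bwdPre h L w)
  | [] => hL
  | a :: w => (bwdPre_closed hcont hL w).preimage (hcont a)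

lemma bwdPre_append : ∀ w w' : List (Fin m), bwdPre h L (w ++ w') = bwdPre h (bwdPre h L w') w
  | [], _ => rfl
  | a :: w, w' => by
      show h a ⁻¹' bwdPre h L (w ++ w') = h a ⁻¹' bwdPre h (bwdPre h L w') w
      rw [bwdPre_append w w']

lemma bwdPre_nonempty (hLne : L.Nonempty) (hinv : L = ⋃ j, h j ⁻¹' L)
    (hfib : ∀ z ∈ L, ∀ j, (h j ⁻¹' ({z} : Set X)).Nonempty) :
    ∀ w : List (Fin m), (bwdPre h L w).Nonempty
  | [] => hLne
  | a :: w => by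
      obtain ⟨z, hz⟩ := bwdPre_nonempty hLne hinv hfib w
      obtain ⟨y, hy⟩ := hfib z (bwdPre_subset h L hinv w hz) a
      have : h a y = z := hy
      exact ⟨y, show h a y ∈ bwdPre h L w from this ▸ hz⟩

lemma bwdPre_compact (hcont : ∀ j, Continuous (h j)) (hLcp : IsCompact L)
    (hinv : L = ⋃ j, h j ⁻¹' L) (w : List (Fin m)) : IsCompact (bwdPre h L w) :=
  IsCompact.of_isClosed_subset hLcp (bwdPre_closed h L hcont hLcp.isClosed w)
    (bwdPre_subset h L hinv w)

lemma pc_castSucc_subset (hinv : L = ⋃ j, h j ⁻¹' L) {k : ℕ} (w : Fin (k + 1) → Fin m) :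
    bwdPre h L (List.ofFn w) ⊆ bwdPre h L (List.ofFn fun i : Fin k => w i.castSucc) := by
  rw [List.ofFn_succ' w, List.concat_eq_append, bwdPre_append]
  exact bwdPre_mono h (bwdPre_subset h L hinv [w (Fin.last k)]) _

lemma wordTrunc_succ_subset (hinv : L = ⋃ j, h j ⁻¹' L) (x : ℕ → Fin m) (k : ℕ) :
    bwdPre h L (wordTrunc x (k + 1)) ⊆ bwdPre h L (wordTrunc x k) :=
  pc_castSucc_subset h L hinv (fun i : Fin (k + 1) => x i.val)

lemma bwdLimSet_subset_trunc (x : ℕ → Fin m) (k : ℕ) :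
    bwdLimSet h L x ⊆ bwdPre h L (wordTrunc x (k + 1)) := Set.iInter_subset _ k

lemma bwdLimSet_subset (hinv : L = ⋃ j, h j ⁻¹' L) (x : ℕ → Fin m) :
    bwdLimSet h L x ⊆ L :=
  (bwdLimSet_subset_trunc h L x 0).trans
    ((wordTrunc_succ_subset h L hinv x 0).trans subset_rfl)

lemma iUnion_pc (hinv : L = ⋃ j, h j ⁻¹' L) :
    ∀ k : ℕ, ⋃ w : Fin k → Fin m, bwdPre h L (List.ofFn w) = L := by
  intro k
  induction k with
  | zero =>
      haveI : Nonempty (Fin 0 → Fin m) := ⟨fun i => i.elim0⟩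
      simp only [List.ofFn_zero]
      show ⋃ _w : Fin 0 → Fin m, L = L
      exact Set.iUnion_const L
  | succ k ih =>
      apply Set.Subset.antisymm
      · exact Set.iUnion_subset fun w => bwdPre_subset h L hinv _
      · intro z hz
        rw [hinv] at hz
        obtain ⟨a, ha⟩ := Set.mem_iUnion.1 hz
        have : h a z ∈ L := ha
        rw [← ih] at this
        obtain ⟨v, hv⟩ := Set.mem_iUnion.1 this
        refine Set.mem_iUnion.2 ⟨Fin.cons a v, ?_⟩
        show z ∈ bwdPre h L (List.ofFn (Fin.cons a v))
        rw [List.ofFn_succ]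
        simp only [Fin.cons_zero, Fin.cons_succ]
        exact hv

lemma exists_pc_mem (hinv : L = ⋃ j, h j ⁻¹' L) (k : ℕ) {z : X} (hz : z ∈ L) :
    ∃ w : Fin k → Fin m, z ∈ bwdPre h L (List.ofFn w) := by
  rw [← iUnion_pc h L hinv k] at hz
  exact Set.mem_iUnion.1 hz

end Aux

section Chain
variable {X : Type*} [MetricSpace X] {m : ℕ} (h : Fin m → X → X) (L : Set X)

/-- ε-chain relation within a set `S`. -/
def chainRel (S : Set X) (ε : ℝ) (p q : X) : Prop := p ∈ S ∧ q ∈ S ∧ dist p q < ε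

/-- ε-chain connectivity within `S`. -/
def ChainConn (S : Set X) (ε : ℝ) (p q : X) : Prop := Relation.ReflTransGen (chainRel S ε) p q

lemma ChainConn.mono {S S' : Set X} (hss : S ⊆ S') {ε : ℝ} {p q : X}
    (hc : ChainConn S ε p q) : ChainConn S' ε p q :=
  Relation.ReflTransGen.mono (r := chainRel S ε) (p := chainRel S' ε) (fun _ _ hr => ⟨hss hr.1, hss hr.2.1, hr.2.2⟩) _ _ hc

lemma IsPreconnected.chainConn {S : Set X} (hS : IsPreconnected S) {ε : ℝ} (hε : 0 < ε)
    {a b : X} (ha : a ∈ S) (hb : b ∈ S) : ChainConn S ε a b := by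
  classical
  by_contra hcon
  set T : Set X := {p | p ∈ S ∧ ChainConn S ε a p} with hT
  set U : Set X := ⋃ p ∈ T, Metric.ball p ε with hU
  set V : Set X := ⋃ p ∈ S \ T, Metric.ball p ε with hV
  have hUo : IsOpen U := isOpen_biUnion fun _ _ => Metric.isOpen_ball
  have hVo : IsOpen V := isOpen_biUnion fun _ _ => Metric.isOpen_ball
  have hSUV : S ⊆ U ∪ V := by
    intro p hp
    by_cases hpT : p ∈ T
    · exact Or.inl (Set.mem_biUnion hpT (Metric.mem_ball_self hε))
    · exact Or.inr (Set.mem_biUnion ⟨hp, hpT⟩ (Metric.mem_ball_self hε))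
  have h1 : (S ∩ U).Nonempty :=
    ⟨a, ha, Set.mem_biUnion ⟨ha, Relation.ReflTransGen.refl⟩ (Metric.mem_ball_self hε)⟩
  have h2 : (S ∩ V).Nonempty :=
    ⟨b, hb, Set.mem_biUnion ⟨hb, fun hbT => hcon hbT.2⟩ (Metric.mem_ball_self hε)⟩
  obtain ⟨c, hcS, hcU, hcV⟩ := hS U V hUo hVo hSUV h1 h2
  obtain ⟨p, hpT, hpc⟩ := Set.mem_iUnion₂.1 hcU
  obtain ⟨q, hqST, hqc⟩ := Set.mem_iUnion₂.1 hcV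
  have hcT : c ∈ T := by
    refine ⟨hcS, hpT.2.tail ⟨hpT.1, hcS, ?_⟩⟩
    rw [dist_comm]; exact Metric.mem_ball.1 hpc
  have hqT : q ∈ T := by
    refine ⟨hqST.1, hcT.2.tail ⟨hcT.1, hqST.1, Metric.mem_ball.1 hqc⟩⟩
  exact hqST.2 hqT

lemma exists_trunc_subset_thickening (hcont : ∀ j, Continuous (h j)) (hLcp : IsCompact L)
    (hinv : L = ⋃ j, h j ⁻¹' L) (x : ℕ → Fin m) {ε : ℝ} (hε : 0 < ε) :
    ∃ k : ℕ, bwdPre h L (wordTrunc x (k + 1)) ⊆ Metric.thickening ε (bwdLimSet h L x) := by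
  by_contra hcon
  push_neg at hcon
  set V : ℕ → Set X :=
    fun k => bwdPre h L (wordTrunc x (k + 1)) \ Metric.thickening ε (bwdLimSet h L x) with hV
  have hne : ∀ k, (V k).Nonempty := by
    intro k
    obtain ⟨z, hz1, hz2⟩ := Set.not_subset.1 (hcon k)
    exact ⟨z, hz1, hz2⟩
  have hdec : ∀ k, V (k + 1) ⊆ V k :=
    fun k => Set.diff_subset_diff_left (wordTrunc_succ_subset h L hinv x (k + 1))
  have hcl : ∀ k, IsClosed (V k) := by
    intro k
    rw [hV]
    simp only [Set.diff_eq]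
    exact (bwdPre_closed h L hcont hLcp.isClosed _).inter Metric.isOpen_thickening.isClosed_compl
  have hcp : IsCompact (V 0) :=
    IsCompact.of_isClosed_subset hLcp (hcl 0)
      (Set.diff_subset.trans (bwdPre_subset h L hinv _))
  obtain ⟨z, hz⟩ :=
    IsCompact.nonempty_iInter_of_sequence_nonempty_isCompact_isClosed V hdec hne hcp hcl
  have hzlim : z ∈ bwdLimSet h L x := by
    refine Set.mem_iInter.2 fun j => ?_
    exact ((Set.mem_iInter.1 hz j).1)
  exact (Set.mem_iInter.1 hz 0).2 (Metric.self_subset_thickening hε _ hzlim)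

end Chain

section Graph
variable {X : Type*} [MetricSpace X] {m : ℕ} (h : Fin m → X → X) (L : Set X)

lemma mk_eq_of_inter {k : ℕ} {w w' : Fin k → Fin m}
    (hne : (bwdPre h L (List.ofFn w) ∩ bwdPre h L (List.ofFn w')).Nonempty) :
    (bwdGraph h L k).connectedComponentMk w = (bwdGraph h L k).connectedComponentMk w' := by
  by_cases hww : w = w'
  · rw [hww]
  · exact SimpleGraph.ConnectedComponent.eq.2 (SimpleGraph.Adj.reachable ⟨hww, hne⟩)

/-- truncation preserves components -/
lemma mk_trunc_eq_of_reachable (hinv : L = ⋃ j, h j ⁻¹' L) {k : ℕ}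
    {w w' : Fin (k + 1) → Fin m} (hr : (bwdGraph h L (k + 1)).Reachable w w') :
    (bwdGraph h L k).connectedComponentMk (fun i => w i.castSucc) =
      (bwdGraph h L k).connectedComponentMk (fun i => w' i.castSucc) := by
  obtain ⟨p⟩ := hr
  induction p with
  | nil => rfl
  | @cons u v c hadj _p ih =>
      refine Eq.trans ?_ ih
      obtain ⟨t, ht1, ht2⟩ := hadj.2
      exact mk_eq_of_inter h L
        ⟨t, pc_castSucc_subset h L hinv u ht1, pc_castSucc_subset h L hinv v ht2⟩

/-- König's lemma for trees of words. -/
lemma koenig (hm : 1 ≤ m) (S : ∀ k : ℕ, Set (Fin (k + 1) → Fin m))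
    (hne : ∀ k, (S k).Nonempty)
    (hcl : ∀ k, ∀ w ∈ S (k + 1), (fun i : Fin (k + 1) => w i.castSucc) ∈ S k) :
    ∃ x : ℕ → Fin m, ∀ k, (fun i : Fin (k + 1) => x i.val) ∈ S k := by
  haveI : NeZero m := ⟨by omega⟩
  set C : ℕ → Set (ℕ → Fin m) := fun k => {x | (fun i : Fin (k + 1) => x i.val) ∈ S k} with hC
  have hCcl : ∀ k, IsClosed (C k) := by
    intro k
    have hco : Continuous fun (x : ℕ → Fin m) => (fun i : Fin (k + 1) => x i.val) :=
      continuous_pi fun i => continuous_apply i.val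
    exact IsClosed.preimage hco (isClosed_discrete (S k))
  have hCne : ∀ k, (C k).Nonempty := by
    intro k
    obtain ⟨w, hw⟩ := hne k
    refine ⟨fun n => if hn : n < k + 1 then w ⟨n, hn⟩ else w 0, ?_⟩
    have : (fun i : Fin (k + 1) =>
        (fun n => if hn : n < k + 1 then w ⟨n, hn⟩ else w 0) i.val) = w := by
      funext i
      simp only [i.isLt, dif_pos, Fin.eta]
    show _ ∈ S k
    rw [this]
    exact hw
  have hdec : ∀ k, C (k + 1) ⊆ C k := by
    intro k x hx
    exact hcl k _ hx
  have hcp : IsCompact (C 0) := (hCcl 0).isCompact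
  obtain ⟨x, hx⟩ :=
    IsCompact.nonempty_iInter_of_sequence_nonempty_isCompact_isClosed C hdec hCne hcp hCcl
  exact ⟨x, fun k => Set.mem_iInter.1 hx k⟩

/-- `w` is ε-good if any two points of its piece are ε-chained within `L`. -/
def goodWord (ε : ℝ) {k : ℕ} (w : Fin k → Fin m) : Prop :=
  ∀ p ∈ bwdPre h L (List.ofFn w), ∀ q ∈ bwdPre h L (List.ofFn w), ChainConn L ε p q

lemma goodWord_of_trunc (hinv : L = ⋃ j, h j ⁻¹' L) {ε : ℝ} {k : ℕ} {w : Fin (k + 1) → Fin m}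
    (hg : goodWord h L ε (fun i : Fin k => w i.castSucc)) : goodWord h L ε w :=
  fun p hp q hq =>
    hg p (pc_castSucc_subset h L hinv w hp) q (pc_castSucc_subset h L hinv w hq)

lemma exists_uniform_good (hm : 1 ≤ m) (hcont : ∀ j, Continuous (h j))
    (hLne : L.Nonempty) (hLcp : IsCompact L) (hinv : L = ⋃ j, h j ⁻¹' L)
    (hconn : ∀ x : ℕ → Fin m, IsConnected (bwdLimSet h L x))
    {ε : ℝ} (hε : 0 < ε) :
    ∃ K : ℕ, ∀ w : Fin (K + 1) → Fin m, goodWord h L ε w := by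
  by_contra hcon
  push_neg at hcon
  obtain ⟨x, hx⟩ := koenig hm (fun k => {w : Fin (k + 1) → Fin m | ¬ goodWord h L ε w})
    (fun k => hcon k)
    (fun k w hw hgood => hw (goodWord_of_trunc h L hinv hgood))
  obtain ⟨k, hk⟩ := exists_trunc_subset_thickening h L hcont hLcp hinv x (half_pos hε)
  apply hx k
  intro p hp q hq
  have hp' : p ∈ Metric.thickening (ε / 2) (bwdLimSet h L x) := hk hp
  have hq' : q ∈ Metric.thickening (ε / 2) (bwdLimSet h L x) := hk hq
  obtain ⟨a, ha, hpa⟩ := Metric.mem_thickening_iff.1 hp'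
  obtain ⟨b, hb, hqb⟩ := Metric.mem_thickening_iff.1 hq'
  have hpL : p ∈ L := bwdPre_subset h L hinv _ hp
  have hqL : q ∈ L := bwdPre_subset h L hinv _ hq
  have haL : a ∈ L := bwdLimSet_subset h L hinv x ha
  have hbL : b ∈ L := bwdLimSet_subset h L hinv x hb
  have hchain : ChainConn L ε a b :=
    ((hconn x).isPreconnected.chainConn hε ha hb).mono (bwdLimSet_subset h L hinv x)
  have h1 : ChainConn L ε p a :=
    Relation.ReflTransGen.single ⟨hpL, haL, lt_of_lt_of_le hpa (by linarith)⟩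
  have h2 : ChainConn L ε b q :=
    Relation.ReflTransGen.single ⟨hbL, hqL, by rw [dist_comm]; exact lt_of_lt_of_le hqb (by linarith)⟩
  exact (h1.trans hchain).trans h2

lemma chain_of_reachable (hinv : L = ⋃ j, h j ⁻¹' L) {ε : ℝ} {K : ℕ}
    (hgood : ∀ w : Fin (K + 1) → Fin m, goodWord h L ε w)
    {w w' : Fin (K + 1) → Fin m} (hr : (bwdGraph h L (K + 1)).Reachable w w') :
    ∀ p ∈ bwdPre h L (List.ofFn w), ∀ q ∈ bwdPre h L (List.ofFn w'), ChainConn L ε p q := by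
  obtain ⟨pw⟩ := hr
  induction pw with
  | nil => exact fun p hp q hq => hgood _ p hp q hq
  | @cons u v c hadj _p ih =>
      intro p hp q hq
      obtain ⟨t, ht1, ht2⟩ := hadj.2
      exact (hgood u p hp t ht1).trans (ih t ht2 q hq)

end Graph

section Central
variable {X : Type*} [MetricSpace X] {m : ℕ} (h : Fin m → X → X) (L : Set X)

/-- Two points of `L` lying over the same compatible component sequence are in the
same connected component of `L`. -/
lemma same_component (hm : 1 ≤ m) (hcont : ∀ j, Continuous (h j))
    (hLne : L.Nonempty) (hLcp : IsCompact L) (hinv : L = ⋃ j, h j ⁻¹' L)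
    (hconn : ∀ x : ℕ → Fin m, IsConnected (bwdLimSet h L x))
    (B : (k : ℕ) → (bwdGraph h L (k + 1)).ConnectedComponent)
    {z z' : X} (hzL : z ∈ L) (hz'L : z' ∈ L)
    (hz : ∀ k : ℕ, ∃ v : Fin (k + 1) → Fin m,
      (bwdGraph h L (k + 1)).connectedComponentMk v = B k ∧ z ∈ bwdPre h L (List.ofFn v))
    (hz' : ∀ k : ℕ, ∃ v : Fin (k + 1) → Fin m,
      (bwdGraph h L (k + 1)).connectedComponentMk v = B k ∧ z' ∈ bwdPre h L (List.ofFn v)) :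
    z' ∈ connectedComponentIn L z := by
  by_contra hcon
  haveI : CompactSpace L := isCompact_iff_compactSpace.1 hLcp
  rw [connectedComponentIn_eq_image hzL] at hcon
  set zt : L := ⟨z, hzL⟩ with hztdef
  set zt' : L := ⟨z', hz'L⟩ with hzt'def
  have hzt' : zt' ∉ connectedComponent zt := by
    intro hmem
    exact hcon ⟨zt', hmem, rfl⟩
  rw [connectedComponent_eq_iInter_isClopen zt] at hzt'
  simp only [Set.mem_iInter, not_forall] at hzt'
  obtain ⟨⟨Z, hZclopen, hztZ⟩, hzt'Z⟩ := hzt'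
  -- the two compact separated pieces of L
  set V : Set X := Subtype.val '' Z with hVdef
  set V' : Set X := Subtype.val '' Zᶜ with hV'def
  have hVcp : IsCompact V := (hZclopen.isClosed.isCompact).image continuous_subtype_val
  have hV'cp : IsCompact V' :=
    ((hZclopen.compl.isClosed).isCompact).image continuous_subtype_val
  have hzV : z ∈ V := ⟨zt, hztZ, rfl⟩
  have hz'V' : z' ∈ V' := ⟨zt', hzt'Z, rfl⟩
  have hdisj : ∀ p, p ∈ V → p ∈ V' → False := by
    rintro p ⟨u, huZ, hu⟩ ⟨u', hu'Z, hu'⟩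
    have : u = u' := Subtype.ext (hu.trans hu'.symm)
    exact hu'Z (this ▸ huZ)
  have hLVV' : ∀ p ∈ L, p ∈ V ∨ p ∈ V' := by
    intro p hp
    by_cases hpZ : (⟨p, hp⟩ : L) ∈ Z
    · exact Or.inl ⟨⟨p, hp⟩, hpZ, rfl⟩
    · exact Or.inr ⟨⟨p, hp⟩, hpZ, rfl⟩
  -- positive separation
  obtain ⟨p₀, hp₀V, hp₀min⟩ :=
    hVcp.exists_isMinOn ⟨z, hzV⟩ (Metric.continuous_infDist_pt V').continuousOn
  set δ : ℝ := Metric.infDist p₀ V' with hδdef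
  have hδpos : 0 < δ := by
    have hp₀notV' : p₀ ∉ V' := fun hmem => hdisj p₀ hp₀V hmem
    exact (hV'cp.isClosed.notMem_iff_infDist_pos ⟨z', hz'V'⟩).1 hp₀notV'
  -- chain from z to z'
  obtain ⟨K, hK⟩ := exists_uniform_good h L hm hcont hLne hLcp hinv hconn hδpos
  obtain ⟨v, hv, hzv⟩ := hz K
  obtain ⟨u, hu, hz'u⟩ := hz' K
  have hreach : (bwdGraph h L (K + 1)).Reachable v u :=
    SimpleGraph.ConnectedComponent.eq.1 (hv.trans hu.symm)
  have hchain : ChainConn L δ z z' :=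
    chain_of_reachable h L hinv hK hreach z hzv z' hz'u
  -- chains starting in V stay in V
  have hstay : ∀ q, ChainConn L δ z q → q ∈ V := by
    intro q hq
    induction hq with
    | refl => exact hzV
    | @tail b c _hab hbc ih =>
        rcases hLVV' c hbc.2.1 with hc | hc
        · exact hc
        · exfalso
          have h1 : δ ≤ Metric.infDist b V' := hp₀min ih
          have h2 : Metric.infDist b V' ≤ dist b c := Metric.infDist_le_dist_of_mem hc
          exact absurd hbc.2.2 (not_lt.2 (h1.trans h2))
  exact hdisj z' (hstay z' hchain) hz'V'

/-- A preconnected subset of `L` meeting the piece of a word `w₀` is covered by the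
pieces of the words in the component of `w₀`. -/
lemma preconnected_mem_component (hcont : ∀ j, Continuous (h j))
    (hLcp : IsCompact L) (hinv : L = ⋃ j, h j ⁻¹' L)
    {C : Set X} (hC : IsPreconnected C) (hCL : C ⊆ L)
    {k : ℕ} {w₀ : Fin (k + 1) → Fin m} {z₀ : X} (hz₀ : z₀ ∈ C)
    (hz₀w : z₀ ∈ bwdPre h L (List.ofFn w₀)) :
    ∀ z ∈ C, ∃ w : Fin (k + 1) → Fin m,
      (bwdGraph h L (k + 1)).connectedComponentMk w =
        (bwdGraph h L (k + 1)).connectedComponentMk w₀ ∧ z ∈ bwdPre h L (List.ofFn w) := by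
  classical
  set mk₀ := (bwdGraph h L (k + 1)).connectedComponentMk w₀ with hmk₀
  set T : Set X := ⋃ w ∈ {w : Fin (k + 1) → Fin m |
    (bwdGraph h L (k + 1)).connectedComponentMk w = mk₀}, bwdPre h L (List.ofFn w) with hT
  set T' : Set X := ⋃ w ∈ {w : Fin (k + 1) → Fin m |
    (bwdGraph h L (k + 1)).connectedComponentMk w ≠ mk₀}, bwdPre h L (List.ofFn w) with hT'
  have hTcl : IsClosed T :=
    Set.Finite.isClosed_biUnion (Set.toFinite _)
      (fun w _ => bwdPre_closed h L hcont hLcp.isClosed _)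
  have hT'cl : IsClosed T' :=
    Set.Finite.isClosed_biUnion (Set.toFinite _)
      (fun w _ => bwdPre_closed h L hcont hLcp.isClosed _)
  have hcover : C ⊆ T ∪ T' := by
    intro z hz
    obtain ⟨w, hw⟩ := exists_pc_mem h L hinv (k + 1) (hCL hz)
    by_cases hwc : (bwdGraph h L (k + 1)).connectedComponentMk w = mk₀
    · exact Or.inl (Set.mem_biUnion hwc hw)
    · exact Or.inr (Set.mem_biUnion hwc hw)
  have hempty : ¬ (C ∩ T').Nonempty := by
    rintro ⟨p, hpC, hpT'⟩
    obtain ⟨q, hqC, hqT, hqT'⟩ :=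
      (isPreconnected_closed_iff.1 hC) T T' hTcl hT'cl hcover
        ⟨z₀, hz₀, Set.mem_biUnion (by exact hmk₀ ▸ rfl) hz₀w⟩ ⟨p, hpC, hpT'⟩
    obtain ⟨w, hwmem, hqw⟩ := Set.mem_iUnion₂.1 hqT
    obtain ⟨w', hw'mem, hqw'⟩ := Set.mem_iUnion₂.1 hqT'
    exact hw'mem ((mk_eq_of_inter h L ⟨q, hqw', hqw⟩).trans hwmem)
  intro z hz
  rcases hcover hz with hzT | hzT'
  · obtain ⟨w, hwmem, hzw⟩ := Set.mem_iUnion₂.1 hzT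
    exact ⟨w, hwmem, hzw⟩
  · exact absurd ⟨z, hz, hzT'⟩ hempty

end Central

section Main
variable {X : Type*} [MetricSpace X] {m : ℕ} (h : Fin m → X → X) (L : Set X)

lemma bwdLimSet_subset_pc (x : ℕ → Fin m) (k : ℕ) :
    bwdLimSet h L x ⊆ bwdPre h L (List.ofFn fun i : Fin (k + 1) => x i.val) :=
  Set.iInter_subset _ k

end Main

/-- For a backward self-similar system with all `L_x` connected, the map `Φ` sending a
compatible sequence of graph components `(B_k)` to the connected component of `L`
containing `L_x` (for any `x` with `x|k ∈ B_k` for all `k`) is well defined and a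
bijection from the inverse limit onto the set of connected components of `L`. -/
theorem backward_components_bijection
    {X : Type*} [MetricSpace X] {m : ℕ} (hm : 1 ≤ m)
    (h : Fin m → X → X) (hcont : ∀ j, Continuous (h j))
    (L : Set X) (hLne : L.Nonempty) (hLcp : IsCompact L)
    (hinv : L = ⋃ j, h j ⁻¹' L)
    (hfib : ∀ z ∈ L, ∀ j, (h j ⁻¹' ({z} : Set X)).Nonempty)
    (hconn : ∀ x : ℕ → Fin m, IsConnected (bwdLimSet h L x)) :
    (∀ B : bwdCompSeq h L, ∃ x : ℕ → Fin m, ∀ k : ℕ,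
        (bwdGraph h L (k + 1)).connectedComponentMk (fun i : Fin (k + 1) => x i.val) = B.1 k) ∧
    ∃ Φ : bwdCompSeq h L ≃ {C : Set X // ∃ y ∈ L, C = connectedComponentIn L y},
      ∀ (B : bwdCompSeq h L) (x : ℕ → Fin m),
        (∀ k : ℕ, (bwdGraph h L (k + 1)).connectedComponentMk
            (fun i : Fin (k + 1) => x i.val) = B.1 k) →
        bwdLimSet h L x ⊆ (Φ B).1 := by
  classical
  have part1 : ∀ B : bwdCompSeq h L, ∃ x : ℕ → Fin m, ∀ k : ℕ,
      (bwdGraph h L (k + 1)).connectedComponentMk (fun i : Fin (k + 1) => x i.val) = B.1 k := by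
    intro B
    exact koenig hm
      (fun k => {w | (bwdGraph h L (k + 1)).connectedComponentMk w = B.1 k})
      (fun k => Quot.exists_rep (B.1 k))
      (fun k w hw => B.2 k w hw)
  refine ⟨part1, ?_⟩
  choose xB hxB using part1
  have hLxne : ∀ x : ℕ → Fin m, (bwdLimSet h L x).Nonempty := fun x => (hconn x).nonempty
  choose zB hzB using fun B => hLxne (xB B)
  have hzBL : ∀ B, zB B ∈ L := fun B => bwdLimSet_subset h L hinv _ (hzB B)
  have words : ∀ (B : bwdCompSeq h L) (x : ℕ → Fin m),
      (∀ k, (bwdGraph h L (k + 1)).connectedComponentMk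
        (fun i : Fin (k + 1) => x i.val) = B.1 k) →
      ∀ z ∈ bwdLimSet h L x, ∀ k : ℕ, ∃ v : Fin (k + 1) → Fin m,
        (bwdGraph h L (k + 1)).connectedComponentMk v = B.1 k ∧
          z ∈ bwdPre h L (List.ofFn v) :=
    fun B x hx z hz k => ⟨fun i : Fin (k + 1) => x i.val, hx k,
      bwdLimSet_subset_pc h L x k hz⟩
  set f : bwdCompSeq h L → {C : Set X // ∃ y ∈ L, C = connectedComponentIn L y} :=
    fun B => ⟨connectedComponentIn L (zB B), zB B, hzBL B, rfl⟩ with hf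
  have hsub : ∀ (B : bwdCompSeq h L) (x : ℕ → Fin m),
      (∀ k, (bwdGraph h L (k + 1)).connectedComponentMk
        (fun i : Fin (k + 1) => x i.val) = B.1 k) →
      bwdLimSet h L x ⊆ connectedComponentIn L (zB B) := by
    intro B x hx z' hz'
    exact same_component h L hm hcont hLne hLcp hinv hconn B.1 (hzBL B)
      (bwdLimSet_subset h L hinv x hz')
      (fun k => words B (xB B) (hxB B) _ (hzB B) k) (fun k => words B x hx z' hz' k)
  have hinj : Function.Injective f := by
    intro B B' hBB'
    have hsets : connectedComponentIn L (zB B) = connectedComponentIn L (zB B') :=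
      congrArg Subtype.val hBB'
    apply Subtype.ext; funext k
    have hmem : zB B' ∈ connectedComponentIn L (zB B) := by
      rw [hsets]; exact mem_connectedComponentIn (hzBL B')
    obtain ⟨w, hw, hw2⟩ := preconnected_mem_component h L hcont hLcp hinv
      isPreconnected_connectedComponentIn (connectedComponentIn_subset L (zB B))
      (mem_connectedComponentIn (hzBL B))
      (bwdLimSet_subset_pc h L (xB B) k (hzB B)) (zB B') hmem
    have h1 : (bwdGraph h L (k + 1)).connectedComponentMk w = B.1 k := hw.trans (hxB B k)
    have h2 : zB B' ∈ bwdPre h L (List.ofFn fun i : Fin (k + 1) => xB B' i.val) :=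
      bwdLimSet_subset_pc h L (xB B') k (hzB B')
    have h3 := mk_eq_of_inter h L ⟨zB B', hw2, h2⟩
    rw [← h1, h3, hxB B' k]
  have hsurj : Function.Surjective f := by
    rintro ⟨C, y, hyL, rfl⟩
    choose wy hwy using fun k => exists_pc_mem h L hinv (k + 1) hyL
    have hcompat : ∀ (k : ℕ) (w : Fin (k + 2) → Fin m),
        (bwdGraph h L (k + 2)).connectedComponentMk w =
          (bwdGraph h L (k + 2)).connectedComponentMk (wy (k + 1)) →
        (bwdGraph h L (k + 1)).connectedComponentMk (fun i => w i.castSucc) =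
          (bwdGraph h L (k + 1)).connectedComponentMk (wy k) := by
      intro k w hw
      have hr := SimpleGraph.ConnectedComponent.eq.1 hw
      rw [mk_trunc_eq_of_reachable h L hinv hr]
      exact mk_eq_of_inter h L
        ⟨y, pc_castSucc_subset h L hinv (wy (k + 1)) (hwy (k + 1)), hwy k⟩
    set B : bwdCompSeq h L :=
      ⟨fun k => (bwdGraph h L (k + 1)).connectedComponentMk (wy k), hcompat⟩ with hB
    refine ⟨B, ?_⟩
    have hmem : zB B ∈ connectedComponentIn L y :=
      same_component h L hm hcont hLne hLcp hinv hconn B.1 hyL (hzBL B)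
        (fun k => ⟨wy k, rfl, hwy k⟩)
        (fun k => words B (xB B) (hxB B) _ (hzB B) k)
    apply Subtype.ext
    show connectedComponentIn L (zB B) = connectedComponentIn L y
    exact (connectedComponentIn_eq hmem).symm
  exact ⟨Equiv.ofBijective f ⟨hinj, hsurj⟩, fun B x hx => hsub B x hx⟩
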